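/- Let P be a finite poset and d ≥ 2. The monoid ℤ_{≥0}A_P generated by the vectors ρ(C), as C ranges over all multichains of P of length d−1, is normal (i.e., ℤ_{≥0}A_P = ℤA_P ∩ ℚ_{≥0}A_P) if and only if P is a disjoint union of chains. -/

import Mathlib

/-- A multichain of length `d - 1`: a multiset of `d` pairwise comparable elements. -/
def IsMultichain {α : Type*} [PartialOrder α] (d : ℕ) (C : Multiset α) : Prop :=
  Multiset.card C = d ∧ ∀ a ∈ C, ∀ b ∈ C, a ≤ b ∨ b ≤ a

/-- `ρ(C)`: the integer vector of multiplicities of `C`. -/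
def rho {α : Type*} [DecidableEq α] (C : Multiset α) : α → ℤ :=
  fun a => (C.count a : ℤ)

/-- `ρ(C)` as a rational vector. -/
def rhoQ {α : Type*} [DecidableEq α] (C : Multiset α) : α → ℚ :=
  fun a => (C.count a : ℚ)

/-- The rational cone `ℚ_{≥0} A_P` generated by the vectors `ρ(C)`. -/
def coneQ (α : Type*) [Fintype α] [DecidableEq α] [PartialOrder α] (d : ℕ) :
    Set (α → ℚ) :=
  { q | ∃ (m : ℕ) (C : Fin m → Multiset α) (c : Fin m → ℚ),
      (∀ k, IsMultichain d (C k) ∧ 0 ≤ c k) ∧ q = ∑ k, c k • rhoQ (C k) }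

/-!
If comparability is transitive, the components of the comparability graph are chains and every
multichain lies in a single component. So for `z ∈ ℤA_P` the sum of the coordinates of `z` over
each component is divisible by `d`; if moreover `z` lies in the cone it is nonnegative, i.e. the
multiplicity vector of a multiset, and this multiset splits greedily into blocks of `d` elements
from a common component, each of which is a multichain.

If `a ~ b ~ c` but `a ≁ c`, the vector `e_a + e_c + (d - 2) e_b` equals
`ρ(a b^(d-1)) + ρ(c b^(d-1)) - ρ(b^d)` and `(ρ(a² b^(d-2)) + ρ(c² b^(d-2))) / 2`. Its coordinate
sum is `d`, so in the monoid it would be a single generator `ρ(C)`; but then `C` contains the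
incomparable `a` and `c`.
-/

open Finset

def multichainVectors (α : Type*) [DecidableEq α] [PartialOrder α] (d : ℕ) : Set (α → ℤ) :=
  { v | ∃ C : Multiset α, IsMultichain d C ∧ v = rho C }

lemma AddSubmonoid.mem_of_mem_closure_of_map_eq {M : Type*} [AddMonoid M] {S : Set M}
    (f : M →+ ℤ) {d : ℤ} (hd : d ≠ 0) (hS : ∀ v ∈ S, f v = d) {z : M}
    (hz : z ∈ AddSubmonoid.closure S) (hfz : f z = d) : z ∈ S := by
  obtain ⟨l, hlS, rfl⟩ := AddSubmonoid.exists_list_of_mem_closure hz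
  have hmap : l.map f = List.replicate l.length d :=
    List.eq_replicate_iff.2 ⟨List.length_map .., by simpa using fun v hv => hS v (hlS v hv)⟩
  rw [map_list_sum, hmap, List.sum_replicate, nsmul_eq_mul, mul_eq_right₀ hd] at hfz
  obtain ⟨v, rfl⟩ := List.length_eq_one_iff.1 (by exact_mod_cast hfz)
  simpa using hlS v (by simp)

lemma AddSubgroup.dvd_of_mem_closure {G : Type*} [AddGroup G] {S : Set G} (f : G →+ ℤ)
    {n : ℤ} (hS : ∀ v ∈ S, n ∣ f v) {z : G} (hz : z ∈ AddSubgroup.closure S) : n ∣ f z :=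
  Int.mem_zmultiples_iff.1 <|
    (AddSubgroup.closure_le ((AddSubgroup.zmultiples n).comap f)).2
      (fun v hv => Int.mem_zmultiples_iff.2 (hS v hv)) hz

section Rho

variable {α : Type*}

def coordSum (s : Finset α) : (α → ℤ) →+ ℤ :=
  AddMonoidHom.mk' (fun z => ∑ b ∈ s, z b) fun _ _ => sum_add_distrib

variable [DecidableEq α]

lemma rho_add (M N : Multiset α) : rho (M + N) = rho M + rho N := by
  funext a
  simp [rho, Multiset.count_add]

lemma rhoQ_add (M N : Multiset α) : rhoQ (M + N) = rhoQ M + rhoQ N := by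
  funext a
  simp [rhoQ, Multiset.count_add]

lemma intCast_rho (M : Multiset α) : (fun a => (rho M a : ℚ)) = rhoQ M := by
  funext a
  simp [rho, rhoQ]

lemma rho_injective : Function.Injective (rho : Multiset α → α → ℤ) :=
  fun _ _ h => Multiset.ext.2 fun a => Int.ofNat_inj.1 (congrFun h a)

variable [Fintype α]

lemma exists_rho_eq {z : α → ℤ} (hz : ∀ a, 0 ≤ z a) : ∃ M, rho M = z := by
  refine ⟨∑ b, Multiset.replicate (z b).toNat b, funext fun a => ?_⟩
  simp [rho, Multiset.count_sum', Multiset.count_replicate, hz a]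

lemma coordSum_filter_rho (p : α → Prop) [DecidablePred p] (M : Multiset α) :
    coordSum (univ.filter p) (rho M) = Multiset.card (M.filter p) := by
  rw [← Multiset.sum_count_eq_card (s := univ) fun _ _ => mem_univ _]
  simp [coordSum, rho, Multiset.count_filter, sum_filter]

lemma coordSum_univ_rho (M : Multiset α) : coordSum univ (rho M) = Multiset.card M := by
  simpa using coordSum_filter_rho (fun _ => True) M

end Rho

section Multichains

open Multiset

variable {α : Type*} [PartialOrder α] {d : ℕ}

lemma isMultichain_replicate (d : ℕ) (b : α) : IsMultichain d (replicate d b) :=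
  ⟨card_replicate d b, fun x hx y hy => by
    rw [eq_of_mem_replicate hx, eq_of_mem_replicate hy]
    exact Or.inl le_rfl⟩

lemma isMultichain_replicate_add_replicate {a b : α} (hab : a ≤ b ∨ b ≤ a) {m n : ℕ}
    (hmn : m + n = d) : IsMultichain d (replicate m a + replicate n b) := by
  refine ⟨by simp [hmn], fun x hx y hy => ?_⟩
  simp only [mem_add, mem_replicate] at hx hy
  rcases hx with ⟨-, rfl⟩ | ⟨-, rfl⟩ <;> rcases hy with ⟨-, rfl⟩ | ⟨-, rfl⟩ <;>
    first | exact Or.inl le_rfl | exact hab | exact hab.symm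

lemma isMultichain_of_forall_comparable
    (htrans : ∀ a b c : α, (a ≤ b ∨ b ≤ a) → (b ≤ c ∨ c ≤ b) → (a ≤ c ∨ c ≤ a))
    {C : Multiset α} {a : α} (hC : ∀ x ∈ C, a ≤ x ∨ x ≤ a) (hcard : card C = d) :
    IsMultichain d C :=
  ⟨hcard, fun x hx y hy => htrans x a y (hC x hx).symm (hC y hy)⟩

variable [DecidableRel (α := α) (· ≤ ·)]

lemma IsMultichain.dvd_card_filter_comparable
    (htrans : ∀ a b c : α, (a ≤ b ∨ b ≤ a) → (b ≤ c ∨ c ≤ b) → (a ≤ c ∨ c ≤ a))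
    {C : Multiset α} (hC : IsMultichain d C) (a : α) :
    d ∣ card (C.filter fun b => a ≤ b ∨ b ≤ a) := by
  by_cases h : ∃ x ∈ C, a ≤ x ∨ x ≤ a
  · obtain ⟨x, hx, hax⟩ := h
    rw [filter_eq_self.2 fun b hb => htrans a x b hax (hC.2 x hx b hb), hC.1]
  · rw [filter_eq_nil.2 fun b hb hab => h ⟨b, hb, hab⟩, card_zero]
    exact dvd_zero d

variable [DecidableEq α]

lemma rho_mem_closure_of_dvd_card_filter_comparable
    (htrans : ∀ a b c : α, (a ≤ b ∨ b ≤ a) → (b ≤ c ∨ c ≤ b) → (a ≤ c ∨ c ≤ a))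
    (hd : 0 < d) (M : Multiset α) (hM : ∀ a, d ∣ card (M.filter fun b => a ≤ b ∨ b ≤ a)) :
    rho M ∈ AddSubmonoid.closure (multichainVectors α d) := by
  induction M using Multiset.strongInductionOn with
  | ih M ih =>
  rcases empty_or_exists_mem M with rfl | ⟨a, ha⟩
  · exact zero_mem _
  have hda : d ≤ card (M.filter fun b => a ≤ b ∨ b ≤ a) :=
    Nat.le_of_dvd (card_pos_iff_exists_mem.2 ⟨a, mem_filter.2 ⟨ha, Or.inl le_rfl⟩⟩) (hM a)
  obtain ⟨C, hCa, hCcard⟩ : ∃ C ≤ M.filter (fun b => a ≤ b ∨ b ≤ a), card C = d := by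
    obtain ⟨C, hC⟩ := card_pos_iff_exists_mem.1 <| by
      rw [Multiset.card_powersetCard]
      exact Nat.choose_pos hda
    exact ⟨C, mem_powersetCard.1 hC⟩
  have hC : IsMultichain d C := isMultichain_of_forall_comparable htrans
    (fun x hx => (mem_filter.1 (mem_of_le hCa hx)).2) hCcard
  obtain ⟨N, rfl⟩ := _root_.le_iff_exists_add.1 (hCa.trans (filter_le _ _))
  have hN : ∀ b, d ∣ card (N.filter fun x => b ≤ x ∨ x ≤ b) := fun b =>
    (Nat.dvd_add_right (hC.dvd_card_filter_comparable htrans b)).1 <| by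
      simpa [filter_add] using hM b
  have hC0 : C ≠ 0 := card_pos.1 (hCcard ▸ hd)
  rw [rho_add]
  exact add_mem (AddSubmonoid.subset_closure ⟨C, hC, rfl⟩)
    (ih N (lt_add_of_pos_left N (pos_iff_ne_zero.2 hC0)) hN)

variable [Fintype α]

lemma dvd_card_filter_comparable_of_rho_mem_closure
    (htrans : ∀ a b c : α, (a ≤ b ∨ b ≤ a) → (b ≤ c ∨ c ≤ b) → (a ≤ c ∨ c ≤ a))
    {M : Multiset α} (hM : rho M ∈ AddSubgroup.closure (multichainVectors α d)) (a : α) :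
    d ∣ card (M.filter fun b => a ≤ b ∨ b ≤ a) := by
  have key := AddSubgroup.dvd_of_mem_closure (coordSum (univ.filter fun b => a ≤ b ∨ b ≤ a))
    (n := d) ?_ hM
  · rwa [coordSum_filter_rho, Int.natCast_dvd_natCast] at key
  rintro v ⟨C, hC, rfl⟩
  rw [coordSum_filter_rho]
  exact Int.natCast_dvd_natCast.2 (hC.dvd_card_filter_comparable htrans a)

end Multichains

lemma isMultichain_of_rho_mem_closure {α : Type*} [Fintype α] [DecidableEq α] [PartialOrder α]
    {d : ℕ} (hd : 0 < d) {M : Multiset α}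
    (hM : rho M ∈ AddSubmonoid.closure (multichainVectors α d)) (hcard : Multiset.card M = d) :
    IsMultichain d M := by
  have hgen : ∀ v ∈ multichainVectors α d, coordSum univ v = d := by
    rintro v ⟨C, hC, rfl⟩
    rw [coordSum_univ_rho, hC.1]
  obtain ⟨C, hC, hMC⟩ := AddSubmonoid.mem_of_mem_closure_of_map_eq (coordSum univ)
    (by exact_mod_cast hd.ne') hgen hM (by rw [coordSum_univ_rho, hcard])
  exact rho_injective hMC ▸ hC

section Cone

variable {α : Type*} [Fintype α] [DecidableEq α] [PartialOrder α] {d : ℕ}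

lemma nonneg_of_mem_coneQ {q : α → ℚ} (h : q ∈ coneQ α d) (a : α) : 0 ≤ q a := by
  obtain ⟨m, C, c, hk, rfl⟩ := h
  rw [Finset.sum_apply]
  exact sum_nonneg fun k _ => mul_nonneg (hk k).2 (Nat.cast_nonneg _)

lemma zero_mem_coneQ : (0 : α → ℚ) ∈ coneQ α d :=
  ⟨0, Fin.elim0, Fin.elim0, fun k => k.elim0, by simp⟩

lemma rhoQ_mem_coneQ {C : Multiset α} (hC : IsMultichain d C) : rhoQ C ∈ coneQ α d :=
  ⟨1, fun _ => C, fun _ => 1, fun _ => ⟨hC, zero_le_one⟩, by simp⟩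

lemma add_mem_coneQ {q r : α → ℚ} (hq : q ∈ coneQ α d) (hr : r ∈ coneQ α d) :
    q + r ∈ coneQ α d := by
  obtain ⟨m, C, c, hk, rfl⟩ := hq
  obtain ⟨n, D, e, hl, rfl⟩ := hr
  refine ⟨m + n, Fin.addCases C D, Fin.addCases c e, fun k => ?_, by simp [Fin.sum_univ_add]⟩
  refine Fin.addCases (fun i => ?_) (fun i => ?_) k
  · simpa using hk i
  · simpa using hl i

lemma smul_mem_coneQ {c : ℚ} (hc : 0 ≤ c) {q : α → ℚ} (hq : q ∈ coneQ α d) :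
    c • q ∈ coneQ α d := by
  obtain ⟨m, C, c', hk, rfl⟩ := hq
  exact ⟨m, C, fun k => c * c' k, fun k => ⟨(hk k).1, mul_nonneg hc (hk k).2⟩,
    by simp [Finset.smul_sum, smul_smul]⟩

lemma intCast_mem_coneQ_of_mem_closure {z : α → ℤ}
    (hz : z ∈ AddSubmonoid.closure (multichainVectors α d)) :
    (fun a => (z a : ℚ)) ∈ coneQ α d := by
  induction hz using AddSubmonoid.closure_induction with
  | mem v hv =>
    obtain ⟨C, hC, rfl⟩ := hv
    rw [intCast_rho]
    exact rhoQ_mem_coneQ hC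
  | zero =>
    convert zero_mem_coneQ using 1
    funext a
    simp
  | add x y _ _ hx hy =>
    convert add_mem_coneQ hx hy using 1
    funext a
    simp

end Cone

section Normality

open Multiset

variable {α : Type*} [Fintype α] [DecidableEq α] [PartialOrder α] {d : ℕ}

lemma mem_closure_multichainVectors_of_mem_coneQ [DecidableRel (α := α) (· ≤ ·)]
    (htrans : ∀ a b c : α, (a ≤ b ∨ b ≤ a) → (b ≤ c ∨ c ≤ b) → (a ≤ c ∨ c ≤ a))
    (hd : 0 < d) {z : α → ℤ} (hz : z ∈ AddSubgroup.closure (multichainVectors α d))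
    (hq : (fun a => (z a : ℚ)) ∈ coneQ α d) :
    z ∈ AddSubmonoid.closure (multichainVectors α d) := by
  obtain ⟨M, rfl⟩ := exists_rho_eq fun a => by exact_mod_cast nonneg_of_mem_coneQ hq a
  exact rho_mem_closure_of_dvd_card_filter_comparable htrans hd M
    (dvd_card_filter_comparable_of_rho_mem_closure htrans hz)

lemma exists_mem_closure_mem_coneQ_not_mem_closure {a b c : α} (hab : a ≤ b ∨ b ≤ a)
    (hbc : b ≤ c ∨ c ≤ b) (hac : ¬(a ≤ c ∨ c ≤ a)) (hd : 2 ≤ d) :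
    ∃ z ∈ AddSubgroup.closure (multichainVectors α d),
      (fun x => (z x : ℚ)) ∈ coneQ α d ∧ z ∉ AddSubmonoid.closure (multichainVectors α d) := by
  obtain ⟨e, rfl⟩ : ∃ e, d = e + 2 := ⟨d - 2, by omega⟩
  set M := replicate 1 a + replicate 1 c + replicate e b
  have hgroup : M + replicate (e + 2) b
      = (replicate 1 a + replicate (e + 1) b) + (replicate 1 c + replicate (e + 1) b) := by
    simp only [M, replicate_add]
    abel
  have hcone : M + M = (replicate 2 a + replicate e b) + (replicate 2 c + replicate e b) := by
    rw [show 2 = 1 + 1 from rfl]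
    simp only [M, replicate_add]
    abel
  refine ⟨rho M, ?_, ?_, fun hmem => hac ?_⟩
  · have hrho : rho M = rho (replicate 1 a + replicate (e + 1) b)
        + rho (replicate 1 c + replicate (e + 1) b) - rho (replicate (e + 2) b) :=
      eq_sub_of_add_eq (by rw [← rho_add, hgroup, rho_add])
    rw [hrho]
    exact sub_mem (add_mem
      (AddSubgroup.subset_closure ⟨_, isMultichain_replicate_add_replicate hab (by omega), rfl⟩)
      (AddSubgroup.subset_closure
        ⟨_, isMultichain_replicate_add_replicate hbc.symm (by omega), rfl⟩))
      (AddSubgroup.subset_closure ⟨_, isMultichain_replicate _ b, rfl⟩)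
  · have hhalf : rhoQ M = (1 / 2 : ℚ) • rhoQ (replicate 2 a + replicate e b)
        + (1 / 2 : ℚ) • rhoQ (replicate 2 c + replicate e b) := by
      rw [← smul_add, ← rhoQ_add, ← hcone, rhoQ_add M M]
      module
    rw [intCast_rho, hhalf]
    exact add_mem_coneQ
      (smul_mem_coneQ (by norm_num)
        (rhoQ_mem_coneQ (isMultichain_replicate_add_replicate hab (by omega))))
      (smul_mem_coneQ (by norm_num)
        (rhoQ_mem_coneQ (isMultichain_replicate_add_replicate hbc.symm (by omega))))
  · exact (isMultichain_of_rho_mem_closure (by omega) hmem (by simp [M])).2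
      a (by simp [M]) c (by simp [M])

end Normality

/-- the monoid `ℤ_{≥0}A_P` is normal (equals `ℤA_P ∩ ℚ_{≥0}A_P`) iff the
poset is a disjoint union of chains, i.e. comparability is transitive. -/
theorem stmt8 (α : Type*) [Fintype α] [DecidableEq α] [PartialOrder α]
    (d : ℕ) (hd : 2 ≤ d) :
    (∀ z : α → ℤ,
        z ∈ AddSubmonoid.closure { v | ∃ C : Multiset α, IsMultichain d C ∧ v = rho C } ↔
        (z ∈ AddSubgroup.closure { v | ∃ C : Multiset α, IsMultichain d C ∧ v = rho C } ∧
          (fun x => (z x : ℚ)) ∈ coneQ α d)) ↔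
      (∀ a b c : α, (a ≤ b ∨ b ≤ a) → (b ≤ c ∨ c ≤ b) → (a ≤ c ∨ c ≤ a)) := by
  classical
  refine ⟨fun hnormal a b c hab hbc => by_contra fun hac => ?_, fun htrans z => ⟨?_, ?_⟩⟩
  · obtain ⟨z, hgroup, hcone, hmon⟩ := exists_mem_closure_mem_coneQ_not_mem_closure hab hbc hac hd
    exact hmon ((hnormal z).2 ⟨hgroup, hcone⟩)
  · exact fun hz => ⟨AddSubmonoid.closure_le.2 AddSubgroup.subset_closure hz,
      intCast_mem_coneQ_of_mem_closure hz⟩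
  · exact fun ⟨hgroup, hcone⟩ =>
      mem_closure_multichainVectors_of_mem_coneQ htrans (by omega) hgroup hcone
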